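/- arXiv:1211.4283 — 2 statements merged into one kernel-verified Lean document; each statement's English description precedes it below -/
import Mathlib

section
/- If n is a positive multiple of 3, then every n-transversal edge of the n-dimensional varietal hypercube VQ_n is contained in a cycle of length 5. -/
/-- The relation `I = {(00,00),(01,01),(10,11),(11,10)}` on pairs of bits,
where a pair `(a, b)` records two consecutive bits (higher bit first). -/
def vqCross (p q : Bool × Bool) : Prop :=
  (p = (false, false) ∧ q = (false, false)) ∨
  (p = (false, true) ∧ q = (false, true)) ∨
  (p = (true, false) ∧ q = (true, true)) ∨
  (p = (true, true) ∧ q = (true, false))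

/-- Adjacency in the varietal hypercube `VQ n`.  A vertex is a function
`Fin n → Bool`, the bit `x_k` (1-indexed, `x = x_n x_{n-1} ⋯ x_1`) being
the value at index `k - 1`; the leading bit `x_n` is at index `n - 1`. -/
def vqAdj : (n : ℕ) → (Fin n → Bool) → (Fin n → Bool) → Prop
  | 0, _, _ => False
  | 1, x, y => x ≠ y
  | (n + 2), x, y =>
    if x (Fin.last (n + 1)) = y (Fin.last (n + 1)) then
      -- both in the same copy of `VQ (n+1)`
      vqAdj (n + 1) (fun i => x i.castSucc) (fun i => y i.castSucc)
    else
      if 3 ∣ (n + 2) then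
        (∀ i : Fin (n + 2), i.val < n - 1 → x i = y i) ∧
        vqCross (x ⟨n, by omega⟩, x ⟨n - 1, by omega⟩)
          (y ⟨n, by omega⟩, y ⟨n - 1, by omega⟩)
      else
        ∀ i : Fin (n + 1), x i.castSucc = y i.castSucc

/-- The `n`-dimensional varietal hypercube `VQ_n`. -/
def varietalCube (n : ℕ) : SimpleGraph (Fin n → Bool) :=
  SimpleGraph.fromRel (vqAdj n)

/-!
With `n = k + 3`, write a vertex as `t a b w`, with leading bits `t, a, b` and tail `w`. Flipping
`a` or `b` is an edge (levels `k + 2` and `k + 1` are not multiples of `3`), and a transversal edge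
joins `0 a b w` to `1 a' b' w` with `(ab, a'b') ∈ I`. Since `(ab, a'b') ∈ I` implies
`(ā b, ā' b̄') ∈ I`, the vertices
`0ab w — 1a'b' w — 1ā'b' w — 1ā'b̄' w — 0āb w — 0ab w` form a `5`-cycle.
-/

theorem SimpleGraph.exists_isCycle_length_five {V : Type*} {G : SimpleGraph V}
    {v₁ v₂ v₃ v₄ v₅ : V} (h₁₂ : G.Adj v₁ v₂) (h₂₃ : G.Adj v₂ v₃) (h₃₄ : G.Adj v₃ v₄)
    (h₄₅ : G.Adj v₄ v₅) (h₅₁ : G.Adj v₅ v₁)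
    (h₁₃ : v₁ ≠ v₃) (h₁₄ : v₁ ≠ v₄) (h₂₄ : v₂ ≠ v₄) (h₂₅ : v₂ ≠ v₅) (h₃₅ : v₃ ≠ v₅) :
    ∃ C : G.Walk v₁ v₁, C.IsCycle ∧ C.length = 5 ∧ s(v₁, v₂) ∈ C.edges := by
  refine ⟨.cons h₁₂ (.cons h₂₃ (.cons h₃₄ (.cons h₄₅ (.cons h₅₁ .nil)))), ?_, rfl, by simp⟩
  have := h₁₂.ne; have := h₂₃.ne; have := h₃₄.ne; have := h₄₅.ne; have := h₅₁.ne
  simp [SimpleGraph.Walk.isCycle_def, SimpleGraph.Walk.isTrail_def]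
  aesop

lemma vqCross_symm {p q : Bool × Bool} (h : vqCross p q) : vqCross q p := by
  unfold vqCross at *; tauto

lemma vqCross_not_fst {a b a' b' : Bool} (h : vqCross (a, b) (a', b')) :
    vqCross (!a, b) (!a', !b') := by
  unfold vqCross at *
  rcases h with ⟨h, h'⟩ | ⟨h, h'⟩ | ⟨h, h'⟩ | ⟨h, h'⟩ <;> simp_all

lemma vqAdj_snoc_snoc_same (n : ℕ) (x y : Fin n → Bool) (t : Bool) :
    vqAdj (n + 1) (Fin.snoc x t) (Fin.snoc y t) ↔ vqAdj n x y := by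
  cases n with
  | zero => simp [vqAdj, Subsingleton.elim x y]
  | succ n => simp [vqAdj]

lemma vqAdj_snoc_snoc_of_ne (n : ℕ) (hn : ¬ 3 ∣ n + 1) (x y : Fin n → Bool) {s t : Bool}
    (hst : s ≠ t) : vqAdj (n + 1) (Fin.snoc x s) (Fin.snoc y t) ↔ x = y := by
  cases n with
  | zero => simp [vqAdj, hst, Subsingleton.elim x y]
  | succ n => simp [vqAdj, hst, hn, funext_iff]

section VQVertex

variable {k : ℕ}

def vqVertex (w : Fin k → Bool) (t a b : Bool) : Fin (k + 3) → Bool :=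
  Fin.snoc (Fin.snoc (Fin.snoc w b) a) t

@[simp]
lemma vqVertex_inj {w w' : Fin k → Bool} {t a b t' a' b' : Bool} :
    vqVertex w t a b = vqVertex w' t' a' b' ↔ w = w' ∧ b = b' ∧ a = a' ∧ t = t' := by
  simp [vqVertex, and_assoc]

lemma exists_eq_vqVertex (x : Fin (k + 3) → Bool) : ∃ w t a b, x = vqVertex w t a b :=
  ⟨Fin.init (Fin.init (Fin.init x)), x (Fin.last _), Fin.init x (Fin.last _),
    Fin.init (Fin.init x) (Fin.last _), by simp [vqVertex]⟩

@[simp]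
lemma vqVertex_top (w : Fin k → Bool) (t a b : Bool) (h : k + 3 - 1 < k + 3) :
    vqVertex w t a b ⟨k + 3 - 1, h⟩ = t :=
  Fin.snoc_last (α := fun _ => Bool) ..

@[simp]
lemma vqVertex_snd (w : Fin k → Bool) (t a b : Bool) (h : k + 1 < k + 3) :
    vqVertex w t a b ⟨k + 1, h⟩ = a := by
  rw [show (⟨k + 1, h⟩ : Fin (k + 3)) = (Fin.last (k + 1)).castSucc from rfl]
  simp [vqVertex]

@[simp]
lemma vqVertex_thd (w : Fin k → Bool) (t a b : Bool) (h : k < k + 3) :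
    vqVertex w t a b ⟨k, h⟩ = b := by
  rw [show (⟨k, h⟩ : Fin (k + 3)) = (Fin.last k).castSucc.castSucc from rfl]
  simp [vqVertex]

lemma vqAdj_vqVertex_of_ne (h3 : 3 ∣ k + 3) {w w' : Fin k → Bool} {t t' a b a' b' : Bool}
    (ht : t ≠ t') :
    vqAdj (k + 3) (vqVertex w t a b) (vqVertex w' t' a' b') ↔
      w = w' ∧ vqCross (a, b) (a', b') := by
  have hlast :
      vqVertex w t a b (Fin.last (k + 2)) ≠ vqVertex w' t' a' b' (Fin.last (k + 2)) := by
    simpa [vqVertex] using ht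
  change vqAdj (k + 1 + 2) _ _ ↔ _
  rw [vqAdj, if_neg hlast, if_pos h3]
  simp only [Nat.add_sub_cancel, vqVertex_snd, vqVertex_thd]
  refine and_congr_left fun _ => ⟨fun h => funext fun j => ?_, ?_⟩
  · simpa [vqVertex] using h j.castSucc.castSucc.castSucc j.isLt
  · rintro rfl i hi
    obtain ⟨j, rfl⟩ : ∃ j : Fin k, i = j.castSucc.castSucc.castSucc := ⟨⟨i, hi⟩, rfl⟩
    simp [vqVertex]

lemma varietalCube_adj_vqVertex_of_ne (h3 : 3 ∣ k + 3) {w w' : Fin k → Bool}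
    {t t' a b a' b' : Bool} (ht : t ≠ t') :
    (varietalCube (k + 3)).Adj (vqVertex w t a b) (vqVertex w' t' a' b') ↔
      w = w' ∧ vqCross (a, b) (a', b') := by
  rw [varietalCube, SimpleGraph.fromRel_adj, vqAdj_vqVertex_of_ne h3 ht,
    vqAdj_vqVertex_of_ne h3 ht.symm]
  constructor
  · rintro ⟨-, h | ⟨rfl, h⟩⟩
    · exact h
    · exact ⟨rfl, vqCross_symm h⟩
  · exact fun h => ⟨by simp [ht], Or.inl h⟩

lemma varietalCube_adj_vqVertex_snd (hk : ¬ 3 ∣ k + 2) (w : Fin k → Bool) (t b : Bool)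
    {a a' : Bool} (h : a ≠ a') :
    (varietalCube (k + 3)).Adj (vqVertex w t a b) (vqVertex w t a' b) := by
  rw [varietalCube, SimpleGraph.fromRel_adj]
  refine ⟨by simp [h], Or.inl ?_⟩
  rw [vqVertex, vqVertex, vqAdj_snoc_snoc_same]
  exact (vqAdj_snoc_snoc_of_ne (k + 1) hk _ _ h).2 rfl

lemma varietalCube_adj_vqVertex_thd (hk : ¬ 3 ∣ k + 1) (w : Fin k → Bool) (t a : Bool)
    {b b' : Bool} (h : b ≠ b') :
    (varietalCube (k + 3)).Adj (vqVertex w t a b) (vqVertex w t a b') := by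
  rw [varietalCube, SimpleGraph.fromRel_adj]
  refine ⟨by simp [h], Or.inl ?_⟩
  rw [vqVertex, vqVertex, vqAdj_snoc_snoc_same, vqAdj_snoc_snoc_same]
  exact (vqAdj_snoc_snoc_of_ne k hk _ _ h).2 rfl

end VQVertex

/-- If `n` is a positive multiple of `3`, every `n`-transversal edge of `VQ_n`
(an edge joining a vertex with leading bit `0` to one with leading bit `1`)
is contained in a cycle of length `5`. -/
theorem stmt6 (n : ℕ) (hn : 1 ≤ n) (h3 : 3 ∣ n) (x y : Fin n → Bool)
    (hx : x ⟨n - 1, by omega⟩ = false) (hy : y ⟨n - 1, by omega⟩ = true)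
    (hadj : (varietalCube n).Adj x y) :
    ∃ (v : Fin n → Bool) (C : (varietalCube n).Walk v v),
      C.IsCycle ∧ C.length = 5 ∧ s(x, y) ∈ C.edges := by
  obtain ⟨k, rfl⟩ : ∃ k, n = k + 3 := ⟨n - 3, by omega⟩
  obtain ⟨w, t, a, b, rfl⟩ := exists_eq_vqVertex x
  obtain ⟨w', t', a', b', rfl⟩ := exists_eq_vqVertex y
  rw [vqVertex_top] at hx hy
  subst hx hy
  obtain ⟨rfl, hab⟩ := (varietalCube_adj_vqVertex_of_ne h3 (by simp)).1 hadj
  have h₂ : ¬ 3 ∣ k + 2 := by omega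
  have h₁ : ¬ 3 ∣ k + 1 := by omega
  exact ⟨_, SimpleGraph.exists_isCycle_length_five hadj
    (varietalCube_adj_vqVertex_snd h₂ w true b' (Bool.not_ne_self a').symm)
    (varietalCube_adj_vqVertex_thd h₁ w true (!a') (Bool.not_ne_self b').symm)
    ((varietalCube_adj_vqVertex_of_ne h3 (by simp)).2
      ⟨rfl, vqCross_symm (vqCross_not_fst hab)⟩)
    (varietalCube_adj_vqVertex_snd h₂ w false b (Bool.not_ne_self a))
    (by simp) (by simp) (by simp) (by simp) (by simp)⟩
end

section
/- Let VQ_n = L ⊙ R (n ≥ 2) with L = VQ^0_{n-1} and R = VQ^1_{n-1}, and let x ∈ L and y ∈ R. Then there exists an n-transversal edge u_L u_R with u_L ∈ L and u_R ∈ R such that d_{VQ_n}(x, y) = d_L(x, u_L) + 1 + d_R(u_R, y), where d_L and d_R denote distances in the induced subgraphs L and R. -/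
/-!
A shortest `x`–`y` path leaves `L` for the first time along a transversal edge `u_L u_R`, and
its part before that edge lies in `L`; so everything rests on `R` being isometric in `VQ_n`.
A walk between two vertices of `R` that makes an excursion `u — c ⋯ a — v` into `L` can be
shortcut inside `R`: the segment `c ⋯ a` projects (drop the leading bit) to a walk of the same
length in `VQ_{n-1}`, and each transversal edge changes the lower `n - 1` bits at most by an edge
of `VQ_{n-1}`. Indeed for `3 ∤ n` it changes none of them, and for `3 ∣ n` at most the bit
`x_{n-2}`, and flipping a bit `x_k` with `3 ∤ k` is always an edge.
-/

namespace SimpleGraph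

variable {V : Type*} {G : SimpleGraph V}

/-- Walks between vertices of `T` can be replaced by no longer walks inside `T`; for `u, v ∈ T`
in the same component this says `d_{G[T]}(u, v) = d_G(u, v)`. -/
def IsIsometric (G : SimpleGraph V) (T : Set V) : Prop :=
  ∀ ⦃u v : V⦄, u ∈ T → v ∈ T → ∀ p : G.Walk u v,
    ∃ q : G.Walk u v, (∀ z ∈ q.support, z ∈ T) ∧ q.length ≤ p.length

lemma exists_walk_length_le_one {u v : V} (h : u = v ∨ G.Adj u v) :
    ∃ p : G.Walk u v, p.length ≤ 1 := by
  rcases h with rfl | h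
  · exact ⟨.nil, zero_le_one⟩
  · exact ⟨h.toWalk, le_rfl⟩

namespace Walk

lemma length_induce (S : Set V) {u v : V} (p : G.Walk u v) (hp : ∀ z ∈ p.support, z ∈ S) :
    (p.induce S hp).length = p.length := by
  have h := congrArg length (p.map_induce hp)
  rwa [length_map] at h

lemma exists_split_at_exit {S : Set V} {x y : V} (p : G.Walk x y) (hx : x ∈ S) (hy : y ∉ S) :
    ∃ (u v : V) (p₁ : G.Walk x u) (p₂ : G.Walk v y), u ∈ S ∧ v ∉ S ∧ G.Adj u v ∧
      (∀ z ∈ p₁.support, z ∈ S) ∧ p₁.length + 1 + p₂.length = p.length := by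
  induction p with
  | nil => exact absurd hx hy
  | @cons x c y hxc p ih =>
    by_cases hc : c ∈ S
    · obtain ⟨u, v, p₁, p₂, hu, hv, huv, hp₁, hlen⟩ := ih hc hy
      refine ⟨u, v, cons hxc p₁, p₂, hu, hv, huv, ?_, ?_⟩
      · simpa [hx] using hp₁
      · simp only [length_cons]
        omega
    · exact ⟨x, c, nil, p, hx, hc, hxc, by simpa using hx, by simp [Nat.add_comm]⟩

end Walk

open Walk in
lemma isIsometric_of_excursion {T : Set V}
    (h : ∀ ⦃u c a v : V⦄, u ∈ T → v ∈ T → G.Adj u c → G.Adj a v → ∀ p : G.Walk c a,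
      (∀ z ∈ p.support, z ∉ T) →
      ∃ q : G.Walk u v, (∀ z ∈ q.support, z ∈ T) ∧ q.length ≤ p.length + 2) :
    G.IsIsometric T := by
  intro u v hu hv p
  induction hk : p.length using Nat.strong_induction_on generalizing u with
  | _ k ih =>
  cases p with
  | nil => exact ⟨nil, by simpa using hu, Nat.zero_le _⟩
  | @cons _ c _ huc p =>
    rw [length_cons] at hk
    by_cases hc : c ∈ T
    · obtain ⟨q, hqT, hq⟩ := ih p.length (by omega) hc p rfl
      exact ⟨cons huc q, by simpa [hu] using hqT, by rw [length_cons]; omega⟩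
    · obtain ⟨a, w, p₁, p₂, ha, hw, haw, hp₁, hlen⟩ :=
        p.exists_split_at_exit (S := Tᶜ) hc (by simpa using hv)
      rw [Set.notMem_compl_iff] at hw
      obtain ⟨q₁, hq₁T, hq₁⟩ := h hu hw huc haw p₁ hp₁
      obtain ⟨q₂, hq₂T, hq₂⟩ := ih p₂.length (by omega) hw p₂ rfl
      refine ⟨q₁.append q₂, fun z hz => ?_, by rw [length_append]; omega⟩
      rcases (mem_support_append_iff _ _).1 hz with hz | hz
      exacts [hq₁T z hz, hq₂T z hz]

open Walk in
lemma IsIsometric.exists_adj_dist_eq {S T : Set V} (hT : G.IsIsometric T)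
    (hST : ∀ v, v ∈ T ↔ v ∉ S) {x y : V} (hxy : G.Reachable x y) (hx : x ∈ S) (hy : y ∈ T) :
    ∃ (u v : V) (hu : u ∈ S) (hv : v ∈ T), G.Adj u v ∧
      G.dist x y = (G.induce S).dist ⟨x, hx⟩ ⟨u, hu⟩ + 1 + (G.induce T).dist ⟨v, hv⟩ ⟨y, hy⟩ := by
  obtain ⟨p, hp⟩ := hxy.exists_walk_length_eq_dist
  obtain ⟨u, v, p₁, p₂, hu, hv, huv, hp₁, hlen⟩ := p.exists_split_at_exit hx ((hST y).1 hy)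
  rw [← hST] at hv
  obtain ⟨q₂, hq₂, hq₂len⟩ := hT hv hy p₂
  let r₁ := p₁.induce S hp₁
  let r₂ := q₂.induce T hq₂
  refine ⟨u, v, hu, hv, huv, le_antisymm ?_ ?_⟩
  · obtain ⟨s₁, hs₁⟩ := Reachable.exists_walk_length_eq_dist ⟨r₁⟩
    obtain ⟨s₂, hs₂⟩ := Reachable.exists_walk_length_eq_dist ⟨r₂⟩
    let t₁ : G.Walk x u := s₁.map (Embedding.induce S).toHom
    let t₂ : G.Walk v y := s₂.map (Embedding.induce T).toHom
    have ht₁ : t₁.length = s₁.length := length_map _ _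
    have ht₂ : t₂.length = s₂.length := length_map _ _
    calc G.dist x y ≤ ((t₁.concat huv).append t₂).length := dist_le _
      _ = _ := by rw [length_append, length_concat, ht₁, ht₂, hs₁, hs₂]
  · calc (G.induce S).dist ⟨x, hx⟩ ⟨u, hu⟩ + 1 + (G.induce T).dist ⟨v, hv⟩ ⟨y, hy⟩
        ≤ r₁.length + 1 + r₂.length := by gcongr <;> exact dist_le _
      _ ≤ p.length := by simp only [r₁, r₂, length_induce]; omega
      _ = G.dist x y := hp

end SimpleGraph

lemma vqCross.fst_eq {p q : Bool × Bool} (h : vqCross p q) : p.1 = q.1 := by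
  rcases h with ⟨rfl, rfl⟩ | ⟨rfl, rfl⟩ | ⟨rfl, rfl⟩ | ⟨rfl, rfl⟩ <;> rfl

namespace varietalCube

open SimpleGraph Fin

variable {m : ℕ}

lemma adj_iff_adj_init_of_last_eq {x y : Fin (m + 2) → Bool}
    (h : x (last (m + 1)) = y (last (m + 1))) :
    (varietalCube (m + 2)).Adj x y ↔ (varietalCube (m + 1)).Adj (init x) (init y) := by
  have hne : x ≠ y ↔ init x ≠ init y := by
    refine not_congr ⟨congrArg init, fun hxy => ?_⟩
    rw [← snoc_init_self x, ← snoc_init_self y, hxy, h]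
  simp only [varietalCube, fromRel_adj, vqAdj, h, if_true]
  exact and_congr hne Iff.rfl

lemma adj_snoc_iff {w w' : Fin (m + 1) → Bool} {b : Bool} :
    (varietalCube (m + 2)).Adj (snoc w b) (snoc w' b) ↔ (varietalCube (m + 1)).Adj w w' := by
  rw [adj_iff_adj_init_of_last_eq (by simp only [snoc_last]), init_snoc, init_snoc]

def layerHom (m : ℕ) (b : Bool) : varietalCube (m + 1) →g varietalCube (m + 2) where
  toFun w := snoc w b
  map_rel' := adj_snoc_iff.2

def layerProj (m : ℕ) (b : Bool) :
    (varietalCube (m + 2)).induce {v | v (last (m + 1)) = b} →g varietalCube (m + 1) where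
  toFun v := init v.1
  map_rel' {v w} h := (adj_iff_adj_init_of_last_eq (v.2.trans w.2.symm)).1 h

lemma adj_of_forall_ne_eq : ∀ {n : ℕ} {x y : Fin n → Bool} (k : Fin n), ¬ 3 ∣ k.val + 1 →
    (∀ i ≠ k, x i = y i) → x k ≠ y k → (varietalCube n).Adj x y
  | 0, _, _, k, _, _, _ => k.elim0
  | 1, _, _, _, _, _, hk => ⟨fun h => hk (congrFun h _), Or.inl fun h => hk (congrFun h _)⟩
  | n + 2, x, y, k, h3, hxy, hk => by
    cases k using lastCases with
    | last =>
      refine ⟨fun h => hk (congrFun h _), Or.inl ?_⟩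
      simp only [vqAdj, hk, if_false]
      rw [if_neg (by simpa using h3)]
      exact fun i => hxy _ (castSucc_lt_last i).ne
    | cast j =>
      rw [adj_iff_adj_init_of_last_eq (hxy _ (castSucc_lt_last j).ne')]
      exact adj_of_forall_ne_eq j (by simpa using h3)
        (fun i hi => hxy _ ((castSucc_injective _).ne hi)) hk

lemma eq_or_adj_of_forall_ne_eq {n : ℕ} {x y : Fin n → Bool} (k : Fin n) (h3 : ¬ 3 ∣ k.val + 1)
    (hxy : ∀ i ≠ k, x i = y i) : x = y ∨ (varietalCube n).Adj x y := by
  by_cases hk : x k = y k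
  · exact Or.inl (funext fun i => if hi : i = k then hi ▸ hk else hxy i hi)
  · exact Or.inr (adj_of_forall_ne_eq k h3 hxy hk)

lemma init_eq_of_vqAdj_of_last_ne {x y : Fin (m + 2) → Bool}
    (hl : x (last (m + 1)) ≠ y (last (m + 1))) (h : vqAdj (m + 2) x y) (i : Fin (m + 1))
    (hi : 3 ∣ m + 2 → i.val ≠ m - 1) :
    x i.castSucc = y i.castSucc := by
  simp only [vqAdj, hl, if_false] at h
  split_ifs at h with h3
  · rcases Nat.lt_or_ge i.val (m - 1) with hlt | hge
    · exact h.1 i.castSucc hlt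
    · have him : i.val = m := by have := hi h3; omega
      have hi' : i.castSucc = ⟨m, by omega⟩ := Fin.ext him
      rw [hi']
      exact h.2.fst_eq
  · exact h i

lemma init_eq_or_adj_of_adj {x y : Fin (m + 2) → Bool} (h : (varietalCube (m + 2)).Adj x y)
    (hl : x (last (m + 1)) ≠ y (last (m + 1))) :
    init x = init y ∨ (varietalCube (m + 1)).Adj (init x) (init y) := by
  have hagree (i : Fin (m + 1)) (hi : 3 ∣ m + 2 → i.val ≠ m - 1) : init x i = init y i := by
    rcases h.2 with h | h
    exacts [init_eq_of_vqAdj_of_last_ne hl h i hi,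
      (init_eq_of_vqAdj_of_last_ne hl.symm h i hi).symm]
  by_cases h3 : 3 ∣ m + 2
  · refine eq_or_adj_of_forall_ne_eq ⟨m - 1, by omega⟩ (by rw [Fin.val_mk]; omega)
      fun i hi => hagree i ?_
    exact fun _ e => hi (Fin.ext e)
  · exact Or.inl (funext fun i => hagree i (absurd · h3))

lemma adj_snoc_false_snoc_true (m : ℕ) :
    (varietalCube (m + 2)).Adj (snoc (fun _ => false) false) (snoc (fun _ => false) true) := by
  refine ⟨fun h => by simpa using congrFun h (last _), Or.inl ?_⟩
  simp only [vqAdj, snoc_last, Bool.false_eq_true, if_false]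
  split_ifs
  · refine ⟨fun i hi => ?_, Or.inl ⟨?_, ?_⟩⟩
    · have hi' : i.val < m + 1 := by omega
      simp [snoc, hi']
    all_goals simp [snoc]
  · simp

theorem preconnected : ∀ m : ℕ, (varietalCube (m + 1)).Preconnected
  | 0 => fun x y => by
    by_cases h : x = y
    · exact h ▸ Reachable.refl x
    · exact Adj.reachable ⟨h, Or.inl h⟩
  | m + 1 => by
    have hbase (x : Fin (m + 2) → Bool) :
        (varietalCube (m + 2)).Reachable x (snoc (fun _ => false) false) := by
      have hlayer := (preconnected m (init x) fun _ => false).map (layerHom m (x (last _)))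
      simp only [layerHom, RelHom.coeFn_mk, snoc_init_self] at hlayer
      cases hx : x (last _)
      · rwa [hx] at hlayer
      · rw [hx] at hlayer
        exact hlayer.trans (adj_snoc_false_snoc_true m).symm.reachable
    exact fun x y => (hbase x).trans (hbase y).symm

open Walk in
theorem isIsometric_layer (m : ℕ) (b : Bool) :
    (varietalCube (m + 2)).IsIsometric {v | v (last (m + 1)) = b} := by
  refine isIsometric_of_excursion fun u c a v hu hv huc hav p hp => ?_
  have hp' (z) (hz : z ∈ p.support) : z ∈ {z : Fin (m + 2) → Bool | z (last (m + 1)) = !b} :=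
    Bool.eq_not.2 (hp z hz)
  have hc : c (last _) = !b := hp' c p.start_mem_support
  have ha : a (last _) = !b := hp' a p.end_mem_support
  let p' : (varietalCube (m + 1)).Walk (init c) (init a) := (p.induce _ hp').map (layerProj m !b)
  obtain ⟨e₁, he₁⟩ := exists_walk_length_le_one
    (init_eq_or_adj_of_adj huc (by rw [hu, hc]; exact Bool.self_ne_not b))
  obtain ⟨e₂, he₂⟩ := exists_walk_length_le_one
    (init_eq_or_adj_of_adj hav (by rw [hv, ha]; exact (Bool.self_ne_not b).symm))
  let q : (varietalCube (m + 2)).Walk u v :=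
    (((e₁.append p').append e₂).map (layerHom m b)).copy
      (by rw [← hu]; exact snoc_init_self u) (by rw [← hv]; exact snoc_init_self v)
  refine ⟨q, fun z hz => ?_, ?_⟩
  · simp only [q, support_copy, Walk.support_map, List.mem_map] at hz
    obtain ⟨w, -, rfl⟩ := hz
    exact snoc_last (α := fun _ => Bool) b w
  · have hp'len : p'.length = p.length := (length_map _ _).trans (length_induce _ _ _)
    simp only [q, length_copy, length_map, length_append, hp'len]
    omega

end varietalCube

/-- Let `VQ_n = L ⊙ R` (`n ≥ 2`), `x ∈ L`, `y ∈ R`.  Then there is an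
`n`-transversal edge `u_L u_R` with
`d_{VQ_n}(x, y) = d_L(x, u_L) + 1 + d_R(u_R, y)`. -/
theorem stmt12 (n : ℕ) (hn : 2 ≤ n) (x y : Fin n → Bool)
    (hx : x ⟨n - 1, by omega⟩ = false) (hy : y ⟨n - 1, by omega⟩ = true) :
    ∃ (uL uR : Fin n → Bool) (huL : uL ⟨n - 1, by omega⟩ = false)
      (huR : uR ⟨n - 1, by omega⟩ = true),
      (varietalCube n).Adj uL uR ∧
      (varietalCube n).dist x y =
        ((varietalCube n).induce {v : Fin n → Bool | v ⟨n - 1, by omega⟩ = false}).dist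
            ⟨x, hx⟩ ⟨uL, huL⟩ + 1 +
        ((varietalCube n).induce {v : Fin n → Bool | v ⟨n - 1, by omega⟩ = true}).dist
            ⟨uR, huR⟩ ⟨y, hy⟩ := by
  obtain ⟨m, rfl⟩ : ∃ m, n = m + 2 := ⟨n - 2, by omega⟩
  exact (varietalCube.isIsometric_layer m true).exists_adj_dist_eq
    (fun _ => Bool.not_eq_false _ ▸ Iff.rfl) (varietalCube.preconnected (m + 1) x y) hx hy
end
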